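/- There exist a constant C > 0 and, for each j₀ ∈ ℕ, functions ρ₁(j₀), ρ₂(j₀) ∈ L²([0,1)) with ‖ρ₁(j₀)‖_{h^{−1}_{j₀}} ≤ C 2^{−j₀} and ‖ρ₂(j₀)‖_{h^{−1}_{j₀}} ≤ C 2^{−j₀}, such that, writing j := ⌊α j₀⌋: (1) for every α ∈ (0, 2/3), 𝔤_j[ρ₁(j₀)] → 0 as j₀ → ∞, while for every α ∈ (2/3, 1), 𝔤_j[ρ₁(j₀)] → ∞ as j₀ → ∞; (2) for every α ∈ (0, 2/5), 2^j 𝔤_j[ρ₂(j₀)] → 0 as j₀ → ∞, while for every α ∈ (2/5, 1), 2^j 𝔤_j[ρ₂(j₀)] → ∞ as j₀ → ∞. In particular the thresholds j ≤ (2/3)j₀ and j ≤ (2/5)j₀ in the dyadic comparison estimates are optimal. -/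

import Mathlib

open MeasureTheory Filter

noncomputable section

/-- The Walsh functions on `[0,1)` (extended by `0` outside), defined by the recursion
`w_0 = 1_{[0,1)}`, `w_l(x) = w_{⌊l/2⌋}(2x)` for `x < 1/2` and
`w_l(x) = (-1)^l w_{⌊l/2⌋}(2x-1)` for `x ≥ 1/2`.  These are the wave packets
`w_l = φ_{[0,1) × [l,l+1)}` of the Walsh tile decomposition. -/
def walsh : ℕ → ℝ → ℝ
  | 0, x => if 0 ≤ x ∧ x < 1 then 1 else 0
  | (l+1), x =>
      if x < 1/2 then walsh ((l+1)/2) (2*x)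
      else (if (l+1) % 2 = 0 then (1:ℝ) else -1) * walsh ((l+1)/2) (2*x - 1)
  termination_by l _ => l
  decreasing_by all_goals omega

/-- The Walsh-Fourier coefficient `⟨ρ, w_l⟩_{L²([0,1))}`. -/
def wCoef (ρ : ℝ → ℝ) (l : ℕ) : ℝ :=
  ∫ x in Set.Ico (0:ℝ) 1, ρ x * walsh l x

/-- The dyadic analytic mixing seminorm up to scale `j`:
`‖ρ‖_{h^{-1}_j} = (∑_{l<2^j} (1+l²)^{-1} |⟨ρ, w_l⟩|²)^{1/2}`. -/
def hnormj (j : ℕ) (ρ : ℝ → ℝ) : ℝ :=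
  (∑ l ∈ Finset.range (2 ^ j), (1 + (l:ℝ) ^ 2)⁻¹ * (wCoef ρ l) ^ 2) ^ (1/2 : ℝ)

/-- The dyadic analytic mixing seminorm `‖ρ‖_{h^{-1}} = (∑_{l} (1+l²)^{-1} |⟨ρ, w_l⟩|²)^{1/2}`. -/
def hnormFull (ρ : ℝ → ℝ) : ℝ :=
  (∑' l : ℕ, (1 + (l:ℝ) ^ 2)⁻¹ * (wCoef ρ l) ^ 2) ^ (1/2 : ℝ)

/-- The dyadic interval `I_{k,j} = [2^{-j}k, 2^{-j}(k+1))`. -/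
def dyadI (j k : ℕ) : Set ℝ :=
  Set.Ico ((k : ℝ) / 2 ^ j) (((k : ℝ) + 1) / 2 ^ j)

/-- The dyadic geometric mixing functional `𝔤_j[ρ] = max_{I ∈ 𝒟_j} |I|⁻¹ |∫_I ρ|`. -/
def gdyad (j : ℕ) (ρ : ℝ → ℝ) : ℝ :=
  ⨆ k : Fin (2 ^ j), (2:ℝ) ^ j * |∫ x in dyadI j k, ρ x|

/-- The martingale projection `P_j ρ = ∑_{I ∈ 𝒟_j} (|I|⁻¹ ∫_I ρ) 1_I`. -/
def Pdyad (j : ℕ) (ρ : ℝ → ℝ) : ℝ → ℝ := fun x =>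
  ∑ k ∈ Finset.range (2 ^ j),
    Set.indicator (dyadI j k) (fun _ => (2:ℝ) ^ j * ∫ y in dyadI j k, ρ y) x

/-- The `L²([0,1))` norm. -/
def L2I (ρ : ℝ → ℝ) : ℝ :=
  (eLpNorm ρ 2 (volume.restrict (Set.Ico (0:ℝ) 1))).toReal

end

/-!
The extremal density is `ρ = (2^{j₀}(j₀+1))⁻¹ ∑_{l<2^{j₀}} √l w_l`. For `l < 2^j` the Walsh
function `w_l` is constant, equal to `±1`, on every interval of `𝒟_j`, while for `l ≥ 2^j` it has
mean zero there. Hence averaging `ρ` over `I ∈ 𝒟_j` only sees the coefficients with `l < 2^j`, and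
the maximum is attained on `[0, 2^{-j})`, where all of them are `1`:
`𝔤_j[ρ] = (2^{j₀}(j₀+1))⁻¹ ∑_{l<2^j} √l ≈ 2^{3j/2 - j₀} / (j₀+1)`.
On the analytic side `‖ρ‖²_{h^{-1}_{j₀}} = (2^{j₀}(j₀+1))⁻² ∑_{l<2^{j₀}} l/(1+l²)`, and the
harmonic sum is `≤ j₀+1`, so `‖ρ‖_{h^{-1}_{j₀}} ≲ 2^{-j₀}`. With `j = ⌊αj₀⌋`, the quantity
`2^{sj} 𝔤_j[ρ]` is `2^{((s+3/2)α-1)j₀}` up to constants and the factor `(j₀+1)⁻¹`, which puts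
the threshold at `α = 1/(s+3/2)`: `2/3` for `s = 0` and `2/5` for `s = 1`.
-/

open Set

lemma walsh_zero_eq_indicator : walsh 0 = (Ico (0 : ℝ) 1).indicator 1 := by
  ext x
  rw [walsh, indicator_apply]
  rfl

lemma walsh_eq_zero_of_notMem {x : ℝ} (hx : x ∉ Ico (0 : ℝ) 1) (l : ℕ) : walsh l x = 0 := by
  induction l using Nat.strong_induction_on generalizing x with
  | _ l ih =>
    rcases l with _ | l
    · simp [walsh_zero_eq_indicator, hx]
    · simp only [mem_Ico, not_and_or, not_le, not_lt] at hx
      rw [walsh]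
      split_ifs
      · exact ih _ (by omega) (by simp only [mem_Ico]; grind)
      all_goals rw [ih _ (by omega) (by simp only [mem_Ico]; grind), mul_zero]

lemma walsh_of_lt_half {x : ℝ} (h₀ : 0 ≤ x) (h₁ : x < 1 / 2) (l : ℕ) :
    walsh l x = walsh (l / 2) (2 * x) := by
  rcases l with _ | l
  · simp only [walsh_zero_eq_indicator, Nat.zero_div]
    rw [indicator_of_mem (by constructor <;> linarith),
      indicator_of_mem (by constructor <;> linarith), Pi.one_apply, Pi.one_apply]
  · rw [walsh, if_pos h₁]

lemma walsh_of_half_le {x : ℝ} (h₀ : 1 / 2 ≤ x) (h₁ : x < 1) (l : ℕ) :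
    walsh l x = (-1) ^ l * walsh (l / 2) (2 * x - 1) := by
  rcases l with _ | l
  · simp only [walsh_zero_eq_indicator, Nat.zero_div, pow_zero, one_mul]
    rw [indicator_of_mem (by constructor <;> linarith),
      indicator_of_mem (by constructor <;> linarith), Pi.one_apply, Pi.one_apply]
  · rw [walsh, if_neg (not_lt.2 h₀), neg_one_pow_eq_pow_mod_two]
    rcases Nat.mod_two_eq_zero_or_one (l + 1) with h | h <;> simp [h]

lemma walsh_mul_walsh (l m : ℕ) (x : ℝ) : walsh l x * walsh m x = walsh (l ^^^ m) x := by
  induction l using Nat.strong_induction_on generalizing m x with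
  | _ l ih =>
    by_cases hx : x ∈ Ico (0 : ℝ) 1
    swap
    · simp [walsh_eq_zero_of_notMem hx]
    rcases l.eq_zero_or_pos with rfl | hl
    · simp [walsh_zero_eq_indicator, hx]
    have hdiv : (l ^^^ m) / 2 = l / 2 ^^^ m / 2 := by
      apply Nat.eq_of_testBit_eq
      simp [Nat.testBit_div_two, Nat.testBit_xor]
    rcases lt_or_ge x (1 / 2) with h | h
    · rw [walsh_of_lt_half hx.1 h, walsh_of_lt_half hx.1 h, walsh_of_lt_half hx.1 h, hdiv,
        ih _ (by omega)]
    · rw [walsh_of_half_le h hx.2, walsh_of_half_le h hx.2, walsh_of_half_le h hx.2, hdiv,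
        ← ih _ (by omega), neg_one_pow_eq_pow_mod_two (n := l ^^^ m), Nat.xor_mod_two_eq,
        ← neg_one_pow_eq_pow_mod_two, pow_add]
      ring

lemma abs_walsh_le_one (l : ℕ) (x : ℝ) : |walsh l x| ≤ 1 := by
  rw [← sq_le_one_iff_abs_le_one, sq, walsh_mul_walsh, Nat.xor_self, walsh_zero_eq_indicator]
  exact indicator_le_self' (fun _ _ => zero_le_one) x

lemma measurable_walsh (l : ℕ) : Measurable (walsh l) := by
  induction l using Nat.strong_induction_on with
  | _ l ih =>
    rcases l with _ | l
    · rw [walsh_zero_eq_indicator]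
      exact measurable_one.indicator measurableSet_Ico
    · have h := ih ((l + 1) / 2) (by omega)
      have : walsh (l + 1) = fun x => if x < 1 / 2 then walsh ((l + 1) / 2) (2 * x)
          else (if (l + 1) % 2 = 0 then (1 : ℝ) else -1) * walsh ((l + 1) / 2) (2 * x - 1) := by
        ext x; rw [walsh]
      rw [this]
      exact Measurable.ite (measurableSet_lt measurable_id measurable_const) (by fun_prop)
        (by fun_prop)

lemma walsh_apply_zero (l : ℕ) : walsh l 0 = 1 := by
  induction l using Nat.strong_induction_on with
  | _ l ih =>
    rcases l.eq_zero_or_pos with rfl | hl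
    · simp [walsh_zero_eq_indicator]
    · rw [walsh_of_lt_half le_rfl (by norm_num), mul_zero, ih _ (by omega)]

lemma integrableOn_walsh (l : ℕ) {s : Set ℝ} (hs : volume s ≠ ⊤) : IntegrableOn (walsh l) s :=
  Measure.integrableOn_of_bounded hs (measurable_walsh l).aestronglyMeasurable
    (ae_of_all _ fun x => (Real.norm_eq_abs _).trans_le (abs_walsh_le_one l x))

lemma integral_dyadI (f : ℝ → ℝ) (j k : ℕ) :
    ∫ x in dyadI j k, f x = (2 ^ j)⁻¹ * ∫ x in Ico (0 : ℝ) 1, f ((x + k) / 2 ^ j) := by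
  have h : (0 : ℝ) < 2 ^ j := by positivity
  rw [dyadI, integral_Ico_eq_integral_Ioc, integral_Ico_eq_integral_Ioc,
    ← intervalIntegral.integral_of_le (by gcongr; linarith),
    ← intervalIntegral.integral_of_le zero_le_one]
  simp_rw [add_div _ (k : ℝ)]
  rw [intervalIntegral.integral_comp_div_add f h.ne', smul_eq_mul, inv_mul_cancel_left₀ h.ne',
    zero_div, zero_add, ← add_div, add_comm 1]

lemma walsh_dyadic_shift {j k : ℕ} (hk : k < 2 ^ j) {x : ℝ} (hx : x ∈ Ico (0 : ℝ) 1) (l : ℕ) :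
    walsh l ((x + k) / 2 ^ j) = walsh l (k / 2 ^ j) * walsh (l / 2 ^ j) x := by
  induction j generalizing k l with
  | zero => simp_all [walsh_apply_zero]
  | succ j ih =>
    rw [Nat.pow_succ', ← Nat.div_div_eq_div_mul, pow_succ']
    have hxk : 0 ≤ (x + k) / (2 * 2 ^ j) := div_nonneg (by linarith [hx.1]) (by positivity)
    rcases lt_or_ge k (2 ^ j) with hk' | hk'
    · have hkR : (k : ℝ) + 1 ≤ 2 ^ j := by exact_mod_cast hk'
      have hx' : (x + k) / (2 * 2 ^ j) < 1 / 2 := by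
        rw [div_lt_iff₀ (by positivity)]; linarith [hx.2]
      have hk'' : (k : ℝ) / (2 * 2 ^ j) < 1 / 2 := by
        rw [div_lt_iff₀ (by positivity)]; linarith
      rw [walsh_of_lt_half hxk hx', walsh_of_lt_half (by positivity) hk'',
        ← mul_div_assoc, ← mul_div_assoc, mul_div_mul_left _ _ (two_ne_zero' ℝ),
        mul_div_mul_left _ _ (two_ne_zero' ℝ), ih hk']
    · obtain ⟨k, rfl⟩ := Nat.exists_eq_add_of_le' hk'
      have hkR : (k : ℝ) + 1 ≤ 2 ^ j := by exact_mod_cast (by omega : k < 2 ^ j)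
      push_cast at hxk ⊢
      have hx' : 1 / 2 ≤ (x + (k + 2 ^ j)) / (2 * 2 ^ j) := by
        rw [le_div_iff₀ (by positivity)]; linarith [hx.1]
      have hx'' : (x + (k + 2 ^ j)) / (2 * 2 ^ j) < 1 := by
        rw [div_lt_iff₀ (by positivity)]; linarith [hx.2]
      have hk₀ : 1 / 2 ≤ (k + 2 ^ j : ℝ) / (2 * 2 ^ j) := by
        rw [le_div_iff₀ (by positivity)]; linarith [(k.cast_nonneg : (0 : ℝ) ≤ k)]
      have hk₁ : (k + 2 ^ j : ℝ) / (2 * 2 ^ j) < 1 := by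
        rw [div_lt_iff₀ (by positivity)]; linarith
      have e₁ : 2 * ((x + (k + 2 ^ j)) / (2 * 2 ^ j)) - 1 = (x + k) / 2 ^ j := by
        field_simp; ring
      have e₂ : 2 * ((k + 2 ^ j : ℝ) / (2 * 2 ^ j)) - 1 = k / 2 ^ j := by
        field_simp; ring
      rw [walsh_of_half_le hx' hx'', walsh_of_half_le hk₀ hk₁, e₁, e₂,
        ih (by omega), mul_assoc]

lemma integral_dyadI_walsh_eq_mul {j k : ℕ} (hk : k < 2 ^ j) (l : ℕ) :
    ∫ x in dyadI j k, walsh l x =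
      walsh l (k / 2 ^ j) / 2 ^ j * ∫ x in Ico (0 : ℝ) 1, walsh (l / 2 ^ j) x := by
  rw [integral_dyadI, setIntegral_congr_fun measurableSet_Ico
    (fun x hx => walsh_dyadic_shift hk hx l), integral_const_mul]
  ring

lemma integral_walsh (n : ℕ) : ∫ x in Ico (0 : ℝ) 1, walsh n x = if n = 0 then 1 else 0 := by
  induction n using Nat.strong_induction_on with
  | _ n ih =>
    rcases n.eq_zero_or_pos with rfl | hn
    · simp [walsh_zero_eq_indicator, integral_indicator measurableSet_Ico]
    have hhalves : Ico (0 : ℝ) 1 = dyadI 1 0 ∪ dyadI 1 1 := by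
      norm_num [dyadI, Ico_union_Ico_eq_Ico]
    have hdisj : Disjoint (dyadI 1 0) (dyadI 1 1) := by
      norm_num [dyadI]
    rw [hhalves, setIntegral_union hdisj measurableSet_Ico (integrableOn_walsh n (by simp [dyadI]))
      (integrableOn_walsh n (by simp [dyadI])), integral_dyadI_walsh_eq_mul (by norm_num),
      integral_dyadI_walsh_eq_mul (by norm_num), if_neg hn.ne']
    have hright : walsh n (1 / 2) = (-1) ^ n := by
      rw [walsh_of_half_le le_rfl (by norm_num)]
      norm_num [walsh_apply_zero]
    simp only [Nat.cast_zero, Nat.cast_one, zero_div, walsh_apply_zero, pow_one, hright]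
    rcases n.even_or_odd with he | ho
    · rw [ih _ (by omega), if_neg (by obtain ⟨m, rfl⟩ := he; omega), he.neg_one_pow]
      ring
    · rw [ho.neg_one_pow]
      ring

lemma integral_dyadI_walsh {j k : ℕ} (hk : k < 2 ^ j) (l : ℕ) :
    ∫ x in dyadI j k, walsh l x = if l < 2 ^ j then walsh l (k / 2 ^ j) / 2 ^ j else 0 := by
  rw [integral_dyadI_walsh_eq_mul hk, integral_walsh]
  simp only [Nat.div_eq_zero_iff_lt (by positivity : 0 < 2 ^ j)]
  split_ifs <;> simp

lemma integral_walsh_mul_walsh (m l : ℕ) :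
    ∫ x in Ico (0 : ℝ) 1, walsh m x * walsh l x = if m = l then 1 else 0 := by
  simp_rw [walsh_mul_walsh, integral_walsh, Nat.xor_eq_zero_iff]

noncomputable def walshPoly (N : ℕ) (a : ℕ → ℝ) (x : ℝ) : ℝ :=
  ∑ l ∈ Finset.range N, a l * walsh l x

section WalshPoly

variable (N : ℕ) (a : ℕ → ℝ)

lemma measurable_walshPoly : Measurable (walshPoly N a) :=
  Finset.measurable_sum _ fun l _ => (measurable_walsh l).const_mul _

lemma abs_walshPoly_le (x : ℝ) : |walshPoly N a x| ≤ ∑ l ∈ Finset.range N, |a l| :=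
  (Finset.abs_sum_le_sum_abs _ _).trans <| Finset.sum_le_sum fun l _ => by
    rw [abs_mul]
    exact mul_le_of_le_one_right (abs_nonneg _) (abs_walsh_le_one l x)

lemma memLp_walshPoly (p : ENNReal) : MemLp (walshPoly N a) p (volume.restrict (Ico (0 : ℝ) 1)) :=
  MemLp.of_bound (measurable_walshPoly N a).aestronglyMeasurable _
    (ae_of_all _ fun x => (Real.norm_eq_abs _).trans_le (abs_walshPoly_le N a x))

lemma wCoef_walshPoly {l : ℕ} (hl : l < N) : wCoef (walshPoly N a) l = a l := by
  have hint : ∀ m ∈ Finset.range N,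
      Integrable (fun x => a m * walsh m x * walsh l x) (volume.restrict (Ico (0 : ℝ) 1)) :=
    fun m _ => by
      simp_rw [mul_assoc, walsh_mul_walsh]
      exact (integrableOn_walsh _ (by simp)).const_mul _
  simp_rw [wCoef, walshPoly, Finset.sum_mul, integral_finsetSum _ hint, mul_assoc,
    integral_const_mul, integral_walsh_mul_walsh, mul_ite, mul_one, mul_zero,
    Finset.sum_ite_eq', Finset.mem_range, if_pos hl]

lemma integral_dyadI_walshPoly {j k : ℕ} (hN : 2 ^ j ≤ N) (hk : k < 2 ^ j) :
    ∫ x in dyadI j k, walshPoly N a x =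
      (∑ l ∈ Finset.range (2 ^ j), a l * walsh l (k / 2 ^ j)) / 2 ^ j := by
  have hfin : volume (dyadI j k) ≠ ⊤ := by simp [dyadI]
  simp only [walshPoly]
  rw [integral_finsetSum _ fun l _ => (integrableOn_walsh l hfin).const_mul _,
    ← Finset.sum_range_add_sum_Ico _ hN, Finset.sum_div]
  simp_rw [integral_const_mul, integral_dyadI_walsh hk]
  rw [Finset.sum_eq_zero (s := Finset.Ico (2 ^ j) N) fun l hl => by
    rw [if_neg (Finset.mem_Ico.1 hl).1.not_gt, mul_zero], add_zero]
  exact Finset.sum_congr rfl fun l hl => by rw [if_pos (Finset.mem_range.1 hl)]; ring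

lemma gdyad_walshPoly {j : ℕ} (ha : ∀ l, 0 ≤ a l) (hN : 2 ^ j ≤ N) :
    gdyad j (walshPoly N a) = ∑ l ∈ Finset.range (2 ^ j), a l := by
  have h2j : (0 : ℝ) < 2 ^ j := by positivity
  have hterm : ∀ k : Fin (2 ^ j), (2 : ℝ) ^ j * |∫ x in dyadI j k, walshPoly N a x| =
      |∑ l ∈ Finset.range (2 ^ j), a l * walsh l (k / 2 ^ j)| := fun k => by
    rw [integral_dyadI_walshPoly N a hN k.isLt, abs_div, abs_of_pos h2j, mul_div_cancel₀ _ h2j.ne']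
  apply le_antisymm
  · refine ciSup_le fun k => (hterm k).trans_le ?_
    refine (Finset.abs_sum_le_sum_abs _ _).trans (Finset.sum_le_sum fun l _ => ?_)
    rw [abs_mul, abs_of_nonneg (ha l)]
    exact mul_le_of_le_one_right (ha l) (abs_walsh_le_one l _)
  · refine le_ciSup_of_le (Set.finite_range _).bddAbove ⟨0, by positivity⟩ ?_
    rw [hterm]
    simp [walsh_apply_zero, abs_of_nonneg (Finset.sum_nonneg fun l _ => ha l)]

lemma hnormj_walshPoly (j : ℕ) :
    hnormj j (walshPoly (2 ^ j) a) =
      (∑ l ∈ Finset.range (2 ^ j), (1 + (l : ℝ) ^ 2)⁻¹ * a l ^ 2) ^ (1 / 2 : ℝ) := by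
  rw [hnormj, Finset.sum_congr rfl fun l hl => by
    rw [wCoef_walshPoly _ _ (Finset.mem_range.1 hl)]]

end WalshPoly

lemma sum_range_two_pow_inv_succ_le (n : ℕ) :
    ∑ l ∈ Finset.range (2 ^ n), ((l : ℝ) + 1)⁻¹ ≤ n + 1 := by
  have h := harmonic_le_one_add_log (2 ^ n)
  have hlog : Real.log 2 ≤ 1 := by linarith [Real.log_le_sub_one_of_pos (two_pos : (0 : ℝ) < 2)]
  rw [harmonic] at h
  push_cast [Real.log_pow] at h
  nlinarith [n.cast_nonneg (α := ℝ)]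

lemma two_pow_mul_sqrt_two_pow (j : ℕ) : (2 : ℝ) ^ j * √((2 : ℝ) ^ j) = 2 ^ (3 / 2 * (j : ℝ)) := by
  rw [Real.sqrt_eq_rpow, ← Real.rpow_natCast, ← Real.rpow_mul zero_le_two,
    ← Real.rpow_add zero_lt_two]
  ring_nf

lemma sum_sqrt_range_two_pow_le (j : ℕ) :
    ∑ l ∈ Finset.range (2 ^ j), √(l : ℝ) ≤ (2 : ℝ) ^ (3 / 2 * (j : ℝ)) := by
  calc ∑ l ∈ Finset.range (2 ^ j), √(l : ℝ)
      ≤ ∑ _l ∈ Finset.range (2 ^ j), √((2 : ℝ) ^ j) :=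
        Finset.sum_le_sum fun l hl => Real.sqrt_le_sqrt (by
          exact_mod_cast (Finset.mem_range.1 hl).le)
    _ = (2 : ℝ) ^ (3 / 2 * (j : ℝ)) := by
        rw [Finset.sum_const, Finset.card_range, nsmul_eq_mul, Nat.cast_pow, Nat.cast_two,
          two_pow_mul_sqrt_two_pow]

lemma two_rpow_le_sum_sqrt_range_two_pow (j : ℕ) :
    (2 : ℝ) ^ (3 / 2 * (j : ℝ)) ≤ ∑ l ∈ Finset.range (2 ^ (j + 1)), √(l : ℝ) := by
  have hcard : (Finset.Ico (2 ^ j) (2 ^ (j + 1)) : Finset ℕ).card = 2 ^ j := by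
    rw [Nat.card_Ico, Nat.pow_succ]; omega
  calc (2 : ℝ) ^ (3 / 2 * (j : ℝ))
      = ∑ _l ∈ (Finset.Ico (2 ^ j) (2 ^ (j + 1)) : Finset ℕ), √((2 : ℝ) ^ j) := by
        rw [Finset.sum_const, hcard, nsmul_eq_mul, Nat.cast_pow, Nat.cast_two,
          two_pow_mul_sqrt_two_pow]
    _ ≤ ∑ l ∈ (Finset.Ico (2 ^ j) (2 ^ (j + 1)) : Finset ℕ), √(l : ℝ) :=
        Finset.sum_le_sum fun l hl => Real.sqrt_le_sqrt (by
          exact_mod_cast (Finset.mem_Ico.1 hl).1)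
    _ ≤ ∑ l ∈ Finset.range (2 ^ (j + 1)), √(l : ℝ) :=
        Finset.sum_le_sum_of_subset_of_nonneg
          (fun l hl => Finset.mem_range.2 (Finset.mem_Ico.1 hl).2) fun _ _ _ => Real.sqrt_nonneg _

lemma tendsto_two_rpow_mul_nhds_zero {β : ℝ} (hβ : β < 0) :
    Tendsto (fun n : ℕ => (2 : ℝ) ^ (β * n)) atTop (nhds 0) := by
  simp_rw [Real.rpow_mul zero_le_two, Real.rpow_natCast]
  exact tendsto_pow_atTop_nhds_zero_of_lt_one (by positivity)
    (Real.rpow_lt_one_of_one_lt_of_neg one_lt_two hβ)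

lemma tendsto_pow_div_succ_atTop {r : ℝ} (hr : 1 < r) :
    Tendsto (fun n : ℕ => r ^ n / (n + 1)) atTop atTop := by
  have hr₀ : 0 < r := by linarith
  have h : Tendsto (fun n : ℕ => ((n : ℝ) + 1) / r ^ n) atTop (nhds 0) := by
    have h := (tendsto_pow_const_div_const_pow_of_one_lt 1 hr).add
      (tendsto_pow_atTop_nhds_zero_of_lt_one (by positivity) (inv_lt_one_of_one_lt₀ hr))
    rw [add_zero] at h
    exact h.congr fun n => by rw [pow_one, inv_pow, add_div, one_div]
  have hpos : ∀ n : ℕ, ((n : ℝ) + 1) / r ^ n ∈ Ioi 0 := fun n => by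
    simp only [mem_Ioi]; positivity
  exact (tendsto_nhdsWithin_iff.2 ⟨h, Eventually.of_forall hpos⟩).inv_tendsto_nhdsGT_zero.congr
    fun n => inv_div _ _

lemma tendsto_two_rpow_mul_div_succ_atTop {β : ℝ} (hβ : 0 < β) :
    Tendsto (fun n : ℕ => (2 : ℝ) ^ (β * n) / (n + 1)) atTop atTop := by
  simp_rw [Real.rpow_mul zero_le_two, Real.rpow_natCast]
  exact tendsto_pow_div_succ_atTop (Real.one_lt_rpow one_lt_two hβ)

noncomputable def rho (j₀ : ℕ) : ℝ → ℝ :=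
  walshPoly (2 ^ j₀) fun l => √(l : ℝ) / (2 ^ j₀ * (j₀ + 1))

lemma hnormj_rho_le (j₀ : ℕ) : hnormj j₀ (rho j₀) ≤ 2 * (2 : ℝ) ^ (-(j₀ : ℝ)) := by
  have hn : (1 : ℝ) ≤ j₀ + 1 := by linarith [j₀.cast_nonneg (α := ℝ)]
  rw [rho, hnormj_walshPoly, ← Real.sqrt_eq_rpow, Real.sqrt_le_iff, Real.rpow_neg zero_le_two,
    Real.rpow_natCast]
  refine ⟨by positivity, ?_⟩
  calc ∑ l ∈ Finset.range (2 ^ j₀), (1 + (l : ℝ) ^ 2)⁻¹ * (√(l : ℝ) / (2 ^ j₀ * (j₀ + 1))) ^ 2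
      ≤ ∑ l ∈ Finset.range (2 ^ j₀), 2 / (2 ^ j₀ * (j₀ + 1)) ^ 2 * ((l : ℝ) + 1)⁻¹ :=
        Finset.sum_le_sum fun l _ => by
          have hl := l.cast_nonneg (α := ℝ)
          rw [div_pow, Real.sq_sqrt hl, div_mul_eq_mul_div, inv_mul_eq_div, div_div,
            div_le_iff₀ (by positivity)]
          field_simp
          nlinarith [sq_nonneg ((l : ℝ) - 1)]
    _ = 2 / (2 ^ j₀ * (j₀ + 1)) ^ 2 * ∑ l ∈ Finset.range (2 ^ j₀), ((l : ℝ) + 1)⁻¹ :=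
        (Finset.mul_sum _ _ _).symm
    _ ≤ 2 / (2 ^ j₀ * (j₀ + 1)) ^ 2 * (j₀ + 1) := by
        gcongr
        exact sum_range_two_pow_inv_succ_le j₀
    _ ≤ (2 * ((2 : ℝ) ^ j₀)⁻¹) ^ 2 := by
        field_simp
        nlinarith

lemma gdyad_nonneg (j : ℕ) (ρ : ℝ → ℝ) : 0 ≤ gdyad j ρ :=
  Real.iSup_nonneg fun _ => by positivity

lemma gdyad_rho {j j₀ : ℕ} (hj : j ≤ j₀) :
    gdyad j (rho j₀) = (∑ l ∈ Finset.range (2 ^ j), √(l : ℝ)) / (2 ^ j₀ * (j₀ + 1)) := by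
  rw [rho, gdyad_walshPoly _ _ (fun l => by positivity) (Nat.pow_le_pow_right two_pos hj),
    Finset.sum_div]

section Thresholds

variable {s α : ℝ}

lemma rpow_mul_gdyad_rho_le (hs : 0 ≤ s) (hα₀ : 0 ≤ α) (hα₁ : α ≤ 1) (j₀ : ℕ) :
    (2 : ℝ) ^ (s * ⌊α * j₀⌋₊) * gdyad ⌊α * j₀⌋₊ (rho j₀) ≤
      2 ^ (((s + 3 / 2) * α - 1) * j₀) := by
  set j := ⌊α * j₀⌋₊
  have hj : (j : ℝ) ≤ α * j₀ := Nat.floor_le (by positivity)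
  have hjj₀ : j ≤ j₀ := Nat.floor_le_of_le (by nlinarith [j₀.cast_nonneg (α := ℝ)])
  have hS : (∑ l ∈ Finset.range (2 ^ j), √(l : ℝ)) / (2 ^ j₀ * (j₀ + 1)) ≤
      2 ^ (3 / 2 * (j : ℝ)) * 2 ^ (-(j₀ : ℝ)) := by
    rw [Real.rpow_neg zero_le_two, Real.rpow_natCast, ← div_eq_mul_inv]
    exact div_le_div₀ (by positivity) (sum_sqrt_range_two_pow_le j) (by positivity)
      (le_mul_of_one_le_right (by positivity) (by linarith [j₀.cast_nonneg (α := ℝ)]))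
  rw [gdyad_rho hjj₀]
  calc (2 : ℝ) ^ (s * j) * ((∑ l ∈ Finset.range (2 ^ j), √(l : ℝ)) / (2 ^ j₀ * (j₀ + 1)))
      ≤ 2 ^ (s * j) * (2 ^ (3 / 2 * (j : ℝ)) * 2 ^ (-(j₀ : ℝ))) := by gcongr
    _ = 2 ^ ((s + 3 / 2) * j - j₀) := by
        rw [← Real.rpow_add zero_lt_two, ← Real.rpow_add zero_lt_two]
        ring_nf
    _ ≤ 2 ^ (((s + 3 / 2) * α - 1) * j₀) :=
        Real.rpow_le_rpow_of_exponent_le one_le_two (by nlinarith)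

lemma le_rpow_mul_gdyad_rho (hs : 0 ≤ s) (hα₁ : α ≤ 1) {j₀ : ℕ} (h : 1 ≤ α * j₀) :
    (2 : ℝ) ^ (((s + 3 / 2) * α - 1) * j₀) / (j₀ + 1) / 2 ^ (s + 3) ≤
      2 ^ (s * ⌊α * j₀⌋₊) * gdyad ⌊α * j₀⌋₊ (rho j₀) := by
  set j := ⌊α * j₀⌋₊
  have hjj₀ : j ≤ j₀ := Nat.floor_le_of_le (by nlinarith [j₀.cast_nonneg (α := ℝ)])
  have hj₁ : 1 ≤ j := Nat.le_floor (by rw [Nat.cast_one]; exact h)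
  obtain ⟨i, hi⟩ : ∃ i, j = i + 1 := ⟨j - 1, by omega⟩
  have hjlt : α * j₀ < j + 1 := Nat.lt_floor_add_one _
  have hji : (j : ℝ) = i + 1 := by rw [hi]; push_cast; ring
  have hsplit : (2 : ℝ) ^ (((s + 3 / 2) * α - 1) * j₀) / (j₀ + 1) / 2 ^ (s + 3) =
      2 ^ (s * (α * j₀ - 1)) * (2 ^ (3 / 2 * (α * j₀ - 2)) / (2 ^ j₀ * (j₀ + 1))) := by
    rw [show ((s + 3 / 2) * α - 1) * j₀ = s * (α * j₀ - 1) + 3 / 2 * (α * j₀ - 2) + (s + 3) - j₀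
      by ring, Real.rpow_sub zero_lt_two, Real.rpow_add zero_lt_two, Real.rpow_add zero_lt_two,
      Real.rpow_natCast]
    field_simp
  have hpow : (2 : ℝ) ^ (s * (α * j₀ - 1)) ≤ 2 ^ (s * j) :=
    Real.rpow_le_rpow_of_exponent_le one_le_two (mul_le_mul_of_nonneg_left (by linarith) hs)
  have hS : (2 : ℝ) ^ (3 / 2 * (α * j₀ - 2)) ≤ ∑ l ∈ Finset.range (2 ^ j), √(l : ℝ) :=
    calc (2 : ℝ) ^ (3 / 2 * (α * j₀ - 2)) ≤ 2 ^ (3 / 2 * (i : ℝ)) :=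
          Real.rpow_le_rpow_of_exponent_le one_le_two (by linarith)
      _ ≤ ∑ l ∈ Finset.range (2 ^ j), √(l : ℝ) := hi ▸ two_rpow_le_sum_sqrt_range_two_pow i
  rw [gdyad_rho hjj₀, hsplit]
  exact mul_le_mul hpow (div_le_div_of_nonneg_right hS (by positivity)) (by positivity)
    (by positivity)

lemma tendsto_rpow_mul_gdyad_rho_nhds_zero (hs : 0 ≤ s) (hα₀ : 0 ≤ α)
    (hα : (s + 3 / 2) * α < 1) :
    Tendsto (fun j₀ : ℕ => (2 : ℝ) ^ (s * ⌊α * j₀⌋₊) * gdyad ⌊α * j₀⌋₊ (rho j₀))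
      atTop (nhds 0) :=
  squeeze_zero (fun _ => mul_nonneg (by positivity) (gdyad_nonneg _ _))
    (rpow_mul_gdyad_rho_le hs hα₀ (by nlinarith))
    (tendsto_two_rpow_mul_nhds_zero (by linarith))

lemma tendsto_rpow_mul_gdyad_rho_atTop (hs : 0 ≤ s) (hα : 1 < (s + 3 / 2) * α) (hα₁ : α ≤ 1) :
    Tendsto (fun j₀ : ℕ => (2 : ℝ) ^ (s * ⌊α * j₀⌋₊) * gdyad ⌊α * j₀⌋₊ (rho j₀))
      atTop atTop := by
  have hα₀ : 0 < α := by nlinarith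
  refine tendsto_atTop_mono' atTop ?_
    ((tendsto_two_rpow_mul_div_succ_atTop (β := (s + 3 / 2) * α - 1) (by linarith)).atTop_div_const
      (by positivity : (0 : ℝ) < 2 ^ (s + 3)))
  filter_upwards [(tendsto_natCast_atTop_atTop.const_mul_atTop hα₀).eventually_ge_atTop 1]
    with j₀ h using le_rpow_mul_gdyad_rho hs hα₁ h

end Thresholds

/-- Optimality of the dyadic thresholds `j ≤ (2/3)j₀` and `j ≤ (2/5)j₀`:
there are families `ρ₁(j₀), ρ₂(j₀) ∈ L²([0,1))` with `‖ρᵢ(j₀)‖_{h^{-1}_{j₀}} ≤ C 2^{-j₀}`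
such that, with `j = ⌊α j₀⌋`, `𝔤_j[ρ₁(j₀)] → 0` for `α < 2/3` but `𝔤_j[ρ₁(j₀)] → ∞` for
`α > 2/3`, and `2^j 𝔤_j[ρ₂(j₀)] → 0` for `α < 2/5` but `2^j 𝔤_j[ρ₂(j₀)] → ∞` for `α > 2/5`. -/
theorem dyadic_optimality :
    ∃ C : ℝ, 0 < C ∧
      ∃ ρ₁ ρ₂ : ℕ → ℝ → ℝ,
        (∀ j₀ : ℕ,
          MemLp (ρ₁ j₀) 2 (volume.restrict (Set.Ico (0:ℝ) 1)) ∧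
          MemLp (ρ₂ j₀) 2 (volume.restrict (Set.Ico (0:ℝ) 1)) ∧
          hnormj j₀ (ρ₁ j₀) ≤ C * (2:ℝ) ^ (-(j₀:ℝ)) ∧
          hnormj j₀ (ρ₂ j₀) ≤ C * (2:ℝ) ^ (-(j₀:ℝ))) ∧
        (∀ α : ℝ, 0 < α → α < 2/3 →
          Tendsto (fun j₀ : ℕ => gdyad ⌊α * (j₀:ℝ)⌋₊ (ρ₁ j₀)) atTop (nhds 0)) ∧
        (∀ α : ℝ, 2/3 < α → α < 1 →
          Tendsto (fun j₀ : ℕ => gdyad ⌊α * (j₀:ℝ)⌋₊ (ρ₁ j₀)) atTop atTop) ∧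
        (∀ α : ℝ, 0 < α → α < 2/5 →
          Tendsto (fun j₀ : ℕ =>
            (2:ℝ) ^ (⌊α * (j₀:ℝ)⌋₊ : ℝ) * gdyad ⌊α * (j₀:ℝ)⌋₊ (ρ₂ j₀)) atTop (nhds 0)) ∧
        (∀ α : ℝ, 2/5 < α → α < 1 →
          Tendsto (fun j₀ : ℕ =>
            (2:ℝ) ^ (⌊α * (j₀:ℝ)⌋₊ : ℝ) * gdyad ⌊α * (j₀:ℝ)⌋₊ (ρ₂ j₀)) atTop atTop) := by
  refine ⟨2, two_pos, rho, rho, fun j₀ => ⟨memLp_walshPoly _ _ 2, memLp_walshPoly _ _ 2,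
    hnormj_rho_le j₀, hnormj_rho_le j₀⟩, ?_, ?_, ?_, ?_⟩
  · intro α hα₀ hα
    simpa using tendsto_rpow_mul_gdyad_rho_nhds_zero le_rfl hα₀.le (by linarith)
  · intro α hα hα₁
    simpa using tendsto_rpow_mul_gdyad_rho_atTop le_rfl (by linarith) hα₁.le
  · intro α hα₀ hα
    simpa using tendsto_rpow_mul_gdyad_rho_nhds_zero zero_le_one hα₀.le (by linarith)
  · intro α hα hα₁
    simpa using tendsto_rpow_mul_gdyad_rho_atTop zero_le_one (by linarith) hα₁.le
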